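/- arXiv:1405.4363 — 2 statements merged into one kernel-verified Lean document; each statement's English description precedes it below -/
import Mathlib

section
/- D(⟦−1, 1⟧) = 2, and for every integer m ≥ 2, D(⟦−m, m⟧) = 2m − 1. -/
/-!
Order a minimal zero-sum sequence over `⟦-b, a⟧` greedily, taking a positive term while the
running sum is `≤ 0` and a negative one otherwise: all partial sums then stay in `⟦1 - b, a⟧`.
By minimality the partial sums of the proper prefixes are pairwise distinct, so the length is at
most `a + b`. Over `⟦-m, m⟧` a sequence containing both `m` and `-m` is `{m, -m}`; otherwise it
lies in `⟦-m, m - 1⟧` or `⟦-(m - 1), m⟧`, whence `2m - 1`. The bound is attained by `m` copies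
of `m - 1` together with `m - 1` copies of `-m`: as `m` and `m - 1` are coprime, a zero-sum
subsequence contains all or none of the copies of `m - 1`.
-/

/-- A minimal zero-sum sequence over `X`: a non-empty multiset of elements of `X`
whose sum is `0` and such that no non-empty proper sub-multiset has sum `0`. -/
def IsMinZeroSumSeq {G : Type*} [AddCommGroup G] (X : Set G) (s : Multiset G) : Prop :=
  s ≠ 0 ∧ (∀ x ∈ s, x ∈ X) ∧ s.sum = 0 ∧ ∀ t < s, t ≠ 0 → t.sum ≠ 0

/-- The Davenport constant of a subset `X` of an abelian group: the supremum of the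
lengths of minimal zero-sum sequences over `X` (0 if there are none). -/
noncomputable def davenport {G : Type*} [AddCommGroup G] (X : Set G) : ℕ∞ :=
  ⨆ (s : Multiset G) (_ : IsMinZeroSumSeq X s), (Multiset.card s : ℕ∞)

open Multiset

section AddCommGroup

variable {G : Type*} [AddCommGroup G] {X Y : Set G} {s : Multiset G}

theorem IsMinZeroSumSeq.of_forall_mem (hs : IsMinZeroSumSeq X s) (hY : ∀ x ∈ s, x ∈ Y) :
    IsMinZeroSumSeq Y s :=
  ⟨hs.1, hY, hs.2.2⟩

theorem IsMinZeroSumSeq.eq_pair (hs : IsMinZeroSumSeq X s) {x : G} (hx : x ∈ s) (hnx : -x ∈ s)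
    (hne : x ≠ -x) : s = {x, -x} := by
  have hle : ({x, -x} : Multiset G) ≤ s := by
    rw [insert_eq_cons, cons_le_of_notMem (by simpa using hne)]
    exact ⟨hx, singleton_le.mpr hnx⟩
  by_contra h
  exact hs.2.2.2 _ (lt_of_le_of_ne hle (Ne.symm h)) (by simp) (by simp)

theorem IsMinZeroSumSeq.injOn_sum_take {l : List G} (hl : IsMinZeroSumSeq X (l : Multiset G)) :
    Set.InjOn (fun k => (l.take k).sum) (Set.Iio l.length) := by
  intro i hi j hj hij
  wlog hlt : i < j generalizing i j
  · rcases (not_lt.mp hlt).eq_or_lt with h | h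
    · exact h.symm
    · exact (this hj hi hij.symm h).symm
  exfalso
  have hjl : j < l.length := hj
  set t := (l.take j).drop i
  have hsum : (l.take i).sum + t.sum = (l.take j).sum := by
    rw [← List.sum_take_add_sum_drop (l.take j) i, List.take_take, min_eq_left hlt.le]
  have hlen : t.length = j - i := by simp only [t, List.length_drop, List.length_take]; omega
  have hle : (t : Multiset G) ≤ l := ((List.drop_sublist _ _).trans (List.take_sublist _ _)).subperm
  refine hl.2.2.2 t (lt_of_le_of_ne hle fun h => ?_) ?_ ?_
  · have := congrArg card h
    simp only [coe_card, hlen] at this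
    omega
  · rw [Ne, coe_eq_zero, ← List.length_eq_zero_iff, hlen]
    omega
  · rw [sum_coe]
    simp only at hij
    rw [hij] at hsum
    simpa using hsum

theorem le_davenport (hs : IsMinZeroSumSeq X s) : (card s : ℕ∞) ≤ davenport X :=
  le_iSup₂ (f := fun s (_ : IsMinZeroSumSeq X s) => (card s : ℕ∞)) s hs

theorem davenport_le_of_forall_card_le {n : ℕ} (h : ∀ s, IsMinZeroSumSeq X s → card s ≤ n) :
    davenport X ≤ n :=
  iSup₂_le fun s hs => Nat.cast_le.mpr (h s hs)

end AddCommGroup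

theorem exists_mem_add_mem_Icc_of_add_sum_eq_zero {a b c : ℤ} {r : Multiset ℤ} (hr : r ≠ 0)
    (hrX : ∀ x ∈ r, x ∈ Set.Icc (-b) a) (hc : c ∈ Set.Icc (1 - b) a) (hsum : c + r.sum = 0) :
    ∃ x ∈ r, c + x ∈ Set.Icc (1 - b) a := by
  by_contra! h
  have hcard : 0 < card r := card_pos.mpr hr
  simp only [Set.mem_Icc, not_and, not_le] at hrX hc h
  rcases le_or_gt c 0 with hc0 | hc0
  · have hneg := sum_le_card_nsmul r (-1) fun x hx => by
      have := hrX x hx; have := h x hx; omega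
    simp only [nsmul_eq_mul] at hneg
    omega
  · have hpos := card_nsmul_le_sum (s := r) (a := 1) fun x hx => by
      have := hrX x hx; have := h x hx; omega
    simp only [nsmul_eq_mul] at hpos
    omega

theorem exists_list_sum_take_mem_Icc {a b c : ℤ} {r : Multiset ℤ}
    (hrX : ∀ x ∈ r, x ∈ Set.Icc (-b) a) (hc : c ∈ Set.Icc (1 - b) a) (hsum : c + r.sum = 0) :
    ∃ l : List ℤ, (l : Multiset ℤ) = r ∧ ∀ k, c + (l.take k).sum ∈ Set.Icc (1 - b) a := by
  induction hn : card r generalizing r c with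
  | zero => exact ⟨[], (card_eq_zero.mp hn).symm, by simpa using hc⟩
  | succ n ih =>
    obtain ⟨x, hx, hcx⟩ :=
      exists_mem_add_mem_Icc_of_add_sum_eq_zero (card_pos.mp (by omega)) hrX hc hsum
    have hsum' : c + x + (r.erase x).sum = 0 := by
      rw [← cons_erase hx, sum_cons] at hsum
      rw [← hsum]; ring
    obtain ⟨l, hl, hlk⟩ := ih (fun y hy => hrX y (mem_of_mem_erase hy)) hcx hsum'
      (by rw [card_erase_of_mem hx, hn]; rfl)
    refine ⟨x :: l, by rw [← cons_coe, hl, cons_erase hx], ?_⟩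
    rintro (_ | k)
    · simpa using hc
    · simpa [add_assoc] using hlk k

theorem IsMinZeroSumSeq.card_le_add {a b : ℕ} (hb : 0 < b) {s : Multiset ℤ}
    (hs : IsMinZeroSumSeq (Set.Icc (-(b : ℤ)) a) s) : card s ≤ a + b := by
  obtain ⟨l, rfl, hl⟩ := exists_list_sum_take_mem_Icc hs.2.1 (c := 0)
    (by simp only [Set.mem_Icc]; omega) (by simp [hs.2.2.1])
  have := Finset.card_le_card_of_injOn (fun k => (l.take k).sum) (s := Finset.range l.length)
    (t := Finset.Icc (1 - (b : ℤ)) a) (fun k _ => by simpa using hl k)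
    (by simpa using hs.injOn_sum_take)
  simp only [Finset.card_range, Int.card_Icc] at this
  simp only [coe_card]
  omega

theorem IsMinZeroSumSeq.card_le_two_mul_sub_one {m : ℕ} (hm : 2 ≤ m) {s : Multiset ℤ}
    (hs : IsMinZeroSumSeq (Set.Icc (-(m : ℤ)) m) s) : card s ≤ 2 * m - 1 := by
  have hmem := hs.2.1
  simp only [Set.mem_Icc] at hmem
  by_cases hpos : (m : ℤ) ∈ s
  · by_cases hneg : -(m : ℤ) ∈ s
    · rw [hs.eq_pair hpos hneg (by omega)]
      simp only [insert_eq_cons, card_cons, card_singleton]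
      omega
    · have := (hs.of_forall_mem (Y := Set.Icc (-((m - 1 : ℕ) : ℤ)) m) fun x hx => by
        have := hmem x hx
        have : x ≠ -m := fun h => hneg (h ▸ hx)
        simp only [Set.mem_Icc]; omega).card_le_add (by omega)
      omega
  · have := (hs.of_forall_mem (Y := Set.Icc (-(m : ℤ)) (m - 1 : ℕ)) fun x hx => by
      have := hmem x hx
      have : x ≠ m := fun h => hpos (h ▸ hx)
      simp only [Set.mem_Icc]; omega).card_le_add (by omega)
    omega

theorem Multiset.eq_replicate_count_add_replicate_count {α : Type*} [DecidableEq α] {u v : α}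
    (huv : u ≠ v) {t : Multiset α} (ht : ∀ x ∈ t, x = u ∨ x = v) :
    t = replicate (t.count u) u + replicate (t.count v) v := by
  ext x
  simp only [count_add, count_replicate]
  by_cases hxu : u = x
  · subst hxu; simp [huv.symm]
  · by_cases hxv : v = x
    · subst hxv; simp [hxu]
    · rw [if_neg hxu, if_neg hxv, count_eq_zero]
      intro hx
      rcases ht x hx with h | h
      exacts [hxu h.symm, hxv h.symm]

theorem Nat.Coprime.eq_zero_or_eq_of_mul_eq_mul {p q i j : ℕ} (hpq : p.Coprime q) (hq : 0 < q)
    (hi : i ≤ q) (h : i * p = j * q) : (i = 0 ∧ j = 0) ∨ (i = q ∧ j = p) := by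
  have hdvd : q ∣ i := hpq.symm.dvd_of_dvd_mul_right ⟨j, by rw [h, mul_comm]⟩
  rcases Nat.eq_zero_or_pos i with rfl | hi0
  · left
    simpa [hq.ne'] using h.symm
  · have hiq : i = q := le_antisymm hi (Nat.le_of_dvd hi0 hdvd)
    subst hiq
    right
    exact ⟨rfl, (Nat.eq_of_mul_eq_mul_left hq (by rw [mul_comm i j, ← h])).symm⟩

theorem isMinZeroSumSeq_replicate_add_replicate {p q : ℕ} (hq : 0 < q) (hpq : p.Coprime q) :
    IsMinZeroSumSeq (Set.Icc (-(q : ℤ)) p) (replicate q (p : ℤ) + replicate p (-(q : ℤ))) := by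
  have hne : (p : ℤ) ≠ -(q : ℤ) := by omega
  refine ⟨by rw [Ne, ← card_eq_zero, card_add, card_replicate, card_replicate]; omega,
    fun x hx => ?_, by simp [mul_comm], fun t ht htne hsum => ?_⟩
  · rcases mem_add.mp hx with h | h <;> rw [eq_of_mem_replicate h] <;> simp only [Set.mem_Icc] <;>
      omega
  have ht' := eq_replicate_count_add_replicate_count hne fun x hx => by
    rcases mem_add.mp (mem_of_le ht.le hx) with h | h
    exacts [Or.inl (eq_of_mem_replicate h), Or.inr (eq_of_mem_replicate h)]
  have hi : count (p : ℤ) t ≤ q :=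
    (count_le_of_le _ ht.le).trans (by simp [count_replicate, hne.symm])
  rw [ht'] at hsum htne ht
  simp only [sum_add, sum_replicate, nsmul_eq_mul] at hsum
  rcases hpq.eq_zero_or_eq_of_mul_eq_mul (j := count (-(q : ℤ)) t) hq hi (by linarith) with
    ⟨h1, h2⟩ | ⟨h1, h2⟩
  · simp [h1, h2] at htne
  · rw [h1, h2] at ht
    exact ht.ne rfl

theorem davenport_symmetric_Icc :
    davenport (Set.Icc (-1 : ℤ) 1) = 2 ∧
    ∀ m : ℕ, 2 ≤ m → davenport (Set.Icc (-(m : ℤ)) m) = ((2 * m - 1 : ℕ) : ℕ∞) := by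
  refine ⟨le_antisymm ?_ ?_, fun m hm => le_antisymm ?_ ?_⟩
  · exact davenport_le_of_forall_card_le fun s hs =>
      IsMinZeroSumSeq.card_le_add (a := 1) (b := 1) one_pos (by simpa using hs)
  · simpa using le_davenport
      (isMinZeroSumSeq_replicate_add_replicate one_pos (Nat.coprime_one_left 1))
  · exact davenport_le_of_forall_card_le fun s hs => hs.card_le_two_mul_sub_one hm
  · have hw := isMinZeroSumSeq_replicate_add_replicate (p := m - 1) (by omega)
      ((Nat.coprime_self_sub_left (by omega)).mpr (Nat.coprime_one_left m))
    have := le_davenport (hw.of_forall_mem (Y := Set.Icc (-(m : ℤ)) m) fun x hx => by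
      have := hw.2.1 x hx
      simp only [Set.mem_Icc] at this ⊢
      omega)
    simpa [show m + (m - 1) = 2 * m - 1 by omega] using this
end

section
/- Let G be a finite abelian group, H an abelian group, and X a finite subset of H. Then D(G × X) ≤ D(G) · D(X), where G × X is regarded as a subset of the abelian group G × H. -/
lemma card_le_davenport {G : Type*} [AddCommGroup G] {X : Set G} {s : Multiset G}
    (hs : IsMinZeroSumSeq X s) : (Multiset.card s : ℕ∞) ≤ davenport X :=
  le_iSup₂ (f := fun (s : Multiset G) (_ : IsMinZeroSumSeq X s) => (Multiset.card s : ℕ∞)) s hs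

/-- Lift a sub-multiset of a mapped multiset. -/
lemma exists_le_of_le_map {α β : Type*} (f : α → β) :
    ∀ (s : Multiset α) (t : Multiset β), t ≤ s.map f → ∃ u, u ≤ s ∧ u.map f = t := by
  classical
  intro s
  induction s using Multiset.induction with
  | empty =>
    intro t ht
    simp only [Multiset.map_zero, Multiset.le_zero] at ht
    exact ⟨0, le_refl _, by simp [ht]⟩
  | cons a s ih =>
    intro t ht
    rw [Multiset.map_cons] at ht
    by_cases h : f a ∈ t
    · obtain ⟨t', rfl⟩ := Multiset.exists_cons_of_mem h
      have ht' : t' ≤ s.map f := (Multiset.cons_le_cons_iff (f a)).mp ht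
      obtain ⟨u, hu, hm⟩ := ih t' ht'
      exact ⟨a ::ₘ u, Multiset.cons_le_cons a hu, by simp [hm]⟩
    · have ht' : t ≤ s.map f := by
        rw [Multiset.le_iff_count] at ht ⊢
        intro b
        rcases eq_or_ne b (f a) with rfl | hb
        · simp [Multiset.count_eq_zero_of_notMem h]
        · have h2 := ht b
          rwa [Multiset.count_cons_of_ne hb] at h2
      obtain ⟨u, hu, hm⟩ := ih t ht'
      exact ⟨u, le_trans hu (Multiset.le_cons_self s a), hm⟩

lemma sum_sum' {α : Type*} [AddCommMonoid α] (L : Multiset (Multiset α)) :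
    L.sum.sum = (L.map Multiset.sum).sum := by
  induction L using Multiset.induction with
  | empty => simp
  | cons a L ih => simp [ih]

lemma card_sum' {α : Type*} (L : Multiset (Multiset α)) :
    Multiset.card L.sum = (L.map Multiset.card).sum := by
  induction L using Multiset.induction with
  | empty => simp
  | cons a L ih => simp [ih]

lemma fst_sum' {G H : Type*} [AddCommMonoid G] [AddCommMonoid H] (S : Multiset (G × H)) :
    S.sum.1 = (S.map Prod.fst).sum := by
  induction S using Multiset.induction with
  | empty => simp
  | cons a S ih => simp [ih]

lemma snd_sum' {G H : Type*} [AddCommMonoid G] [AddCommMonoid H] (S : Multiset (G × H)) :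
    S.sum.2 = (S.map Prod.snd).sum := by
  induction S using Multiset.induction with
  | empty => simp
  | cons a S ih => simp [ih]

lemma sum_sum_fst {G H : Type*} [AddCommMonoid G] [AddCommMonoid H]
    (L : Multiset (Multiset (G × H))) :
    L.sum.sum.1 = (L.map (fun B => B.sum.1)).sum := by
  rw [sum_sum', fst_sum', Multiset.map_map]; rfl

lemma sum_sum_snd {G H : Type*} [AddCommMonoid G] [AddCommMonoid H]
    (L : Multiset (Multiset (G × H))) :
    L.sum.sum.2 = (L.map (fun B => B.sum.2)).sum := by
  rw [sum_sum', snd_sum', Multiset.map_map]; rfl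

/-- Decomposition of a `snd`-zero-sum sequence into blocks whose `snd`-projections
are minimal zero-sum sequences over `X`. -/
lemma decompose {G H : Type*} [AddCommGroup G] [AddCommGroup H] (X : Set H) :
    ∀ (n : ℕ) (S : Multiset (G × H)), Multiset.card S ≤ n → S ≠ 0 →
      (∀ p ∈ S, p.2 ∈ X) → (S.map Prod.snd).sum = 0 →
      ∃ L : Multiset (Multiset (G × H)), L.sum = S ∧
        ∀ B ∈ L, IsMinZeroSumSeq X (B.map Prod.snd) := by
  intro n
  induction n with
  | zero =>
    intro S hcard hne _ _
    exact absurd (Multiset.card_eq_zero.mp (Nat.le_zero.mp hcard)) hne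
  | succ n ih =>
    intro S hcard hne hX hsum
    by_cases hmin : IsMinZeroSumSeq X (S.map Prod.snd)
    · exact ⟨{S}, Multiset.sum_singleton S, by simpa using hmin⟩
    · have h1 : S.map Prod.snd ≠ 0 := by
        simpa using hne
      have h2 : ∀ x ∈ S.map Prod.snd, x ∈ X := by
        intro x hx
        obtain ⟨p, hp, rfl⟩ := Multiset.mem_map.mp hx
        exact hX p hp
      simp only [IsMinZeroSumSeq, not_and] at hmin
      have := hmin h1 h2 hsum
      push_neg at this
      obtain ⟨t, htlt, htne, htsum⟩ := this
      obtain ⟨u, huS, hum⟩ := exists_le_of_le_map Prod.snd S t htlt.le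
      obtain ⟨v, rfl⟩ := Multiset.le_iff_exists_add.mp huS
      have hcardu : Multiset.card u < Multiset.card (u + v) := by
        have h3 := Multiset.card_lt_card htlt
        rwa [Multiset.card_map, ← hum, Multiset.card_map] at h3
      have hune : u ≠ 0 := by
        intro h; subst h; simp at hum; exact htne hum.symm
      have hvne : v ≠ 0 := by
        intro h; subst h; simp at hcardu
      have hvsum : (v.map Prod.snd).sum = 0 := by
        have h4 : (u.map Prod.snd).sum + (v.map Prod.snd).sum = 0 := by
          rw [← Multiset.sum_add, ← Multiset.map_add]; exact hsum
        rw [hum, htsum, zero_add] at h4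
        exact h4
      have husum : (u.map Prod.snd).sum = 0 := by rw [hum]; exact htsum
      have hadd : Multiset.card (u + v) = Multiset.card u + Multiset.card v :=
        Multiset.card_add u v
      have hu1 : 0 < Multiset.card u := Multiset.card_pos.mpr hune
      have hcu : Multiset.card u ≤ n := by omega
      have hcv : Multiset.card v ≤ n := by omega
      obtain ⟨L₁, hL₁, hL₁min⟩ := ih u hcu hune
        (fun p hp => hX p (Multiset.mem_add.mpr (Or.inl hp))) husum
      obtain ⟨L₂, hL₂, hL₂min⟩ := ih v hcv hvne
        (fun p hp => hX p (Multiset.mem_add.mpr (Or.inr hp))) hvsum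
      refine ⟨L₁ + L₂, by rw [Multiset.sum_add, hL₁, hL₂], ?_⟩
      intro B hB
      rcases Multiset.mem_add.mp hB with h | h
      · exact hL₁min B h
      · exact hL₂min B h

theorem davenport_group_times_set_le (G H : Type*) [AddCommGroup G] [Fintype G]
    [AddCommGroup H] (X : Set H) (hX : X.Finite) :
    davenport {p : G × H | p.2 ∈ X} ≤
      davenport (Set.univ : Set G) * davenport X := by
  rw [davenport]
  refine iSup₂_le fun S hS => ?_
  obtain ⟨hSne, hSX, hSsum, hSmin⟩ := hS
  have hsnd : (S.map Prod.snd).sum = 0 := by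
    rw [← snd_sum', hSsum]; rfl
  obtain ⟨L, hLsum, hLmin⟩ := decompose X (Multiset.card S) S le_rfl hSne
    (fun p hp => hSX p hp) hsnd
  -- each block is nonempty and its snd-sum is 0
  have hBne : ∀ B ∈ L, B ≠ 0 := by
    intro B hB h
    have h1 := (hLmin B hB).1
    subst h; simp at h1
  have hBsnd : ∀ B ∈ L, B.sum.2 = 0 := by
    intro B hB
    rw [snd_sum']
    exact (hLmin B hB).2.2.1
  -- the multiset of first coordinates of block sums
  set g : Multiset G := L.map (fun B => B.sum.1) with hg
  have hLne : L ≠ 0 := by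
    intro h; rw [h] at hLsum; simp at hLsum; exact hSne hLsum.symm
  have hgsum : g.sum = 0 := by
    rw [hg, ← sum_sum_fst, hLsum, hSsum]; rfl
  have hgmin : IsMinZeroSumSeq (Set.univ : Set G) g := by
    refine ⟨by simpa [hg] using hLne, fun _ _ => Set.mem_univ _, hgsum, ?_⟩
    intro t' ht'lt ht'ne ht'sum
    obtain ⟨L', hL'le, hL'map⟩ := exists_le_of_le_map _ L t' ht'lt.le
    set u : Multiset (G × H) := L'.sum with hu
    obtain ⟨M, rfl⟩ := Multiset.le_iff_exists_add.mp hL'le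
    have hMne : M ≠ 0 := by
      intro h
      have hgt : g = t' := by rw [hg, h, add_zero, hL'map]
      exact (ne_of_lt ht'lt) hgt.symm
    have huS : u + M.sum = S := by rw [hu, ← Multiset.sum_add, hLsum]
    -- u.sum = 0
    have husum : u.sum = 0 := by
      have hfst : u.sum.1 = 0 := by
        rw [hu, sum_sum_fst, hL'map, ht'sum]
      have hsndu : u.sum.2 = 0 := by
        rw [hu, sum_sum_snd]
        refine Multiset.sum_eq_zero ?_
        intro x hx
        obtain ⟨B, hB, rfl⟩ := Multiset.mem_map.mp hx
        exact hBsnd B (Multiset.mem_of_le (Multiset.le_add_right _ _) hB)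
      exact Prod.ext hfst hsndu
    -- u ≠ 0
    have hune : u ≠ 0 := by
      have hL'ne : L' ≠ 0 := by
        intro h; rw [h] at hL'map; simp at hL'map; exact ht'ne hL'map.symm
      obtain ⟨B, hB⟩ := Multiset.exists_mem_of_ne_zero hL'ne
      have hBL : B ∈ L' + M := Multiset.mem_of_le (Multiset.le_add_right _ _) hB
      have hBne' : B ≠ 0 := hBne B hBL
      have hBle : B ≤ u := Multiset.single_le_sum (fun x _ => Multiset.zero_le x) B hB
      intro h
      rw [h, Multiset.le_zero] at hBle
      exact hBne' hBle
    -- u < S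
    have hult : u < S := by
      rw [← huS]
      have hMsne : M.sum ≠ 0 := by
        obtain ⟨B, hB⟩ := Multiset.exists_mem_of_ne_zero hMne
        have hBL : B ∈ L' + M := Multiset.mem_of_le (Multiset.le_add_left _ _) hB
        have hBle : B ≤ M.sum := Multiset.single_le_sum (fun x _ => Multiset.zero_le x) B hB
        intro h
        rw [h, Multiset.le_zero] at hBle
        exact hBne B hBL hBle
      exact lt_add_of_pos_right u (pos_iff_ne_zero.mpr hMsne)
    exact hSmin u hult hune husum
  -- now the counting
  have hk : (Multiset.card g : ℕ∞) ≤ davenport (Set.univ : Set G) :=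
    card_le_davenport hgmin
  have hcardS : (Multiset.card S : ℕ∞) =
      (L.map (fun B => (Multiset.card B : ℕ∞))).sum := by
    rw [← hLsum, card_sum']
    push_cast
    rw [Multiset.map_map]
    rfl
  have hblock : ∀ x ∈ L.map (fun B => (Multiset.card B : ℕ∞)), x ≤ davenport X := by
    intro x hx
    obtain ⟨B, hB, rfl⟩ := Multiset.mem_map.mp hx
    have h5 : (Multiset.card (B.map Prod.snd) : ℕ∞) ≤ davenport X :=
      card_le_davenport (hLmin B hB)
    simpa using h5
  calc (Multiset.card S : ℕ∞)
      = (L.map (fun B => (Multiset.card B : ℕ∞))).sum := hcardS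
    _ ≤ Multiset.card (L.map (fun B => (Multiset.card B : ℕ∞))) • davenport X :=
        Multiset.sum_le_card_nsmul _ _ hblock
    _ = (Multiset.card L : ℕ∞) * davenport X := by
        rw [Multiset.card_map, nsmul_eq_mul]
    _ = (Multiset.card g : ℕ∞) * davenport X := by rw [hg, Multiset.card_map]
    _ ≤ davenport (Set.univ : Set G) * davenport X := mul_le_mul_left hk _
end
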